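/- arXiv:2011.14110 — 2 statements merged into one kernel-verified Lean document; each statement's English description precedes it below -/
import Mathlib

section
/- Let f : [0,∞) → [0,∞) be amenable. Then f is (M)-(S)-preserving (i.e., for every metric space (X,d), f∘d is a semimetric and (X, f∘d) is a strong b-metric space) if and only if there exists K ≥ 1 such that for every triangle triplet (a,b,c), the values f(a), f(b), f(c) can be arranged into a strong K-triangle triplet. -/
/-- A semimetric on a set `X`: nonnegative, vanishing exactly on the diagonal, symmetric. -/
def IsSemimetricOn {α : Type} (X : Set α) (d : α → α → ℝ) : Prop :=
  (∀ x ∈ X, ∀ y ∈ X, 0 ≤ d x y) ∧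
  (∀ x ∈ X, ∀ y ∈ X, (d x y = 0 ↔ x = y)) ∧
  (∀ x ∈ X, ∀ y ∈ X, d x y = d y x)

/-- A strong b-metric on `X` with relaxation constant `K`. -/
def IsStrongBMetricOn {α : Type} (X : Set α) (d : α → α → ℝ) (K : ℝ) : Prop :=
  IsSemimetricOn X d ∧ 1 ≤ K ∧
    ∀ x ∈ X, ∀ y ∈ X, ∀ z ∈ X, d x z ≤ K * d x y + d y z

/-- A b-metric on `X` with relaxation constant `K`. -/
def IsBMetricOn {α : Type} (X : Set α) (d : α → α → ℝ) (K : ℝ) : Prop :=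
  IsSemimetricOn X d ∧ 1 ≤ K ∧
    ∀ x ∈ X, ∀ y ∈ X, ∀ z ∈ X, d x z ≤ K * (d x y + d y z)

/-- A metric on `X`. -/
def IsMetricOn {α : Type} (X : Set α) (d : α → α → ℝ) : Prop :=
  IsSemimetricOn X d ∧
    ∀ x ∈ X, ∀ y ∈ X, ∀ z ∈ X, d x z ≤ d x y + d y z

/-- The set of distances realized on `X`; its `sSup` is the diameter. -/
def distSet {α : Type} (X : Set α) (d : α → α → ℝ) : Set ℝ :=
  {r : ℝ | ∃ x ∈ X, ∃ y ∈ X, d x y = r}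

/-- `(X, d)` satisfies the `K`-relaxed polygonal inequality. -/
def SatisfiesRPI {α : Type} (X : Set α) (d : α → α → ℝ) (K : ℝ) : Prop :=
  ∀ n : ℕ, ∀ x : ℕ → α, (∀ i ≤ n, x i ∈ X) →
    d (x 0) (x n) ≤ K * ∑ i ∈ Finset.range n, d (x i) (x (i + 1))

/-- `(a,b,c)` with `a ≥ b ≥ c ≥ 0` is a `K`-triangle triplet: `a ≤ K (b + c)`. -/
def IsTriangleTriplet (K a b c : ℝ) : Prop :=
  b ≤ a ∧ c ≤ b ∧ 0 ≤ c ∧ a ≤ K * (b + c)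

/-- `(a,b,c)` with `a ≥ b ≥ c ≥ 0` is a strong `K`-triangle triplet: `a ≤ K c + b`. -/
def IsStrongTriangleTriplet (K a b c : ℝ) : Prop :=
  b ≤ a ∧ c ≤ b ∧ 0 ≤ c ∧ a ≤ K * c + b

/-- The values `x, y, z` can be arranged into a `K`-triangle triplet. -/
def FormsTriangleTriplet (K x y z : ℝ) : Prop :=
  ∃ a b c : ℝ, ({a, b, c} : Multiset ℝ) = ({x, y, z} : Multiset ℝ) ∧
    IsTriangleTriplet K a b c

/-- The values `x, y, z` can be arranged into a strong `K`-triangle triplet. -/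
def FormsStrongTriangleTriplet (K x y z : ℝ) : Prop :=
  ∃ a b c : ℝ, ({a, b, c} : Multiset ℝ) = ({x, y, z} : Multiset ℝ) ∧
    IsStrongTriangleTriplet K a b c

section MSaux

lemma MS_msw12 (x y z : ℝ) : ({y,x,z}:Multiset ℝ) = {x,y,z} := by
  simp only [Multiset.insert_eq_cons]; exact Multiset.cons_swap y x {z}

lemma MS_msw23 (x y z : ℝ) : ({x,z,y}:Multiset ℝ) = {x,y,z} := by
  simp only [Multiset.insert_eq_cons]; exact congrArg _ (Multiset.cons_swap z y 0)

lemma MS_msrot (x y z : ℝ) : ({z,x,y}:Multiset ℝ) = {x,y,z} := by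
  rw [MS_msw12, MS_msw23, MS_msw12]

lemma MS_msw13 (x y z : ℝ) : ({z,y,x}:Multiset ℝ) = {x,y,z} := by
  rw [MS_msw23, MS_msrot]

lemma MS_perm3 {a b c u v w : ℝ} (h : ({a,b,c}:Multiset ℝ) = {u,v,w}) :
    (a=u∧b=v∧c=w)∨(a=u∧b=w∧c=v)∨(a=v∧b=u∧c=w)∨(a=v∧b=w∧c=u)∨(a=w∧b=u∧c=v)∨(a=w∧b=v∧c=u) := by
  simp only [Multiset.insert_eq_cons, Multiset.cons_eq_cons, Multiset.singleton_eq_cons_iff] at h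
  aesop

lemma MS_sort3 (p q r : ℝ) : ∃ a b c : ℝ, ({a,b,c} : Multiset ℝ) = {p,q,r} ∧ c ≤ b ∧ b ≤ a := by
  rcases le_total p q with h1 | h1 <;> rcases le_total q r with h2 | h2 <;> rcases le_total p r with h3 | h3
  · exact ⟨r,q,p, MS_msw13 p q r, h1, h2⟩
  · exact ⟨r,q,p, MS_msw13 p q r, h1, h2⟩
  · exact ⟨q,r,p, (MS_msrot q r p).symm ▸ rfl, h3, h2⟩
  · exact ⟨q,p,r, MS_msw12 p q r, h3, h1⟩
  · exact ⟨r,p,q, MS_msrot p q r, h1, h3⟩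
  · exact ⟨p,r,q, MS_msw23 p q r, h2, h3⟩
  · exact ⟨p,q,r, rfl, h2, h1⟩
  · exact ⟨p,q,r, rfl, h2, h1⟩

lemma MS_lemA {K a b c u v w : ℝ} (hK : 1 ≤ K) (hs : IsStrongTriangleTriplet K a b c)
    (h : ({a,b,c}:Multiset ℝ) = {u,v,w}) : u ≤ K * v + w := by
  obtain ⟨h1, h2, h3, h4⟩ := hs
  rcases MS_perm3 h with ⟨e1,e2,e3⟩|⟨e1,e2,e3⟩|⟨e1,e2,e3⟩|⟨e1,e2,e3⟩|⟨e1,e2,e3⟩|⟨e1,e2,e3⟩ <;>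
    subst e1 <;> subst e2 <;> subst e3 <;> nlinarith

noncomputable def MS_tri (a b c : ℝ) : Fin 3 → Fin 3 → ℝ :=
  fun i j => !![(0:ℝ),b,a; b,0,c; a,c,0] i j

noncomputable def MS_D (A B C : ℕ → ℝ) : ℕ × Fin 3 → ℕ × Fin 3 → ℝ := fun p q =>
  if p.1 = q.1 then MS_tri (A p.1) (B p.1) (C p.1) p.2 q.2 else max (A p.1) (A q.1)

variable {A B C : ℕ → ℝ}

lemma MS_D_metric (hC : ∀ n, 0 < C n) (hCB : ∀ n, C n ≤ B n) (hBA : ∀ n, B n ≤ A n)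
    (hT : ∀ n, A n ≤ B n + C n) :
    ((∀ (p q : ℕ × Fin 3), 0 ≤ MS_D A B C p q) ∧
     (∀ (p q : ℕ × Fin 3), (MS_D A B C p q = 0 ↔ p = q)) ∧
     (∀ (p q : ℕ × Fin 3), MS_D A B C p q = MS_D A B C q p)) ∧
    (∀ (p q r : ℕ × Fin 3), MS_D A B C p r ≤ MS_D A B C p q + MS_D A B C q r) := by
  have hB : ∀ n, 0 < B n := fun n => lt_of_lt_of_le (hC n) (hCB n)
  have hA : ∀ n, 0 < A n := fun n => lt_of_lt_of_le (hB n) (hBA n)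
  have tnn : ∀ n (i j : Fin 3), 0 ≤ MS_tri (A n) (B n) (C n) i j := by
    intro n i j; fin_cases i <;> fin_cases j <;> simp [MS_tri] <;>
      linarith [hC n, hCB n, hBA n]
  have tsym : ∀ n (i j : Fin 3), MS_tri (A n) (B n) (C n) i j = MS_tri (A n) (B n) (C n) j i := by
    intro n i j; fin_cases i <;> fin_cases j <;> simp [MS_tri]
  have tzero : ∀ n (i j : Fin 3), MS_tri (A n) (B n) (C n) i j = 0 ↔ i = j := by
    intro n i j; fin_cases i <;> fin_cases j <;> simp [MS_tri] <;> intro h <;>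
      linarith [hC n, hCB n, hBA n]
  have ttri : ∀ n (i j k : Fin 3), MS_tri (A n) (B n) (C n) i k ≤
      MS_tri (A n) (B n) (C n) i j + MS_tri (A n) (B n) (C n) j k := by
    intro n i j k; fin_cases i <;> fin_cases j <;> fin_cases k <;> simp [MS_tri] <;>
      linarith [hC n, hCB n, hBA n, hT n]
  have tle : ∀ n (i j : Fin 3), MS_tri (A n) (B n) (C n) i j ≤ A n := by
    intro n i j; fin_cases i <;> fin_cases j <;> simp [MS_tri] <;>
      linarith [hC n, hCB n, hBA n]
  have Dsame : ∀ m (i j : Fin 3), MS_D A B C (m,i) (m,j) = MS_tri (A m) (B m) (C m) i j :=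
    fun m i j => if_pos rfl
  have Ddiff : ∀ m n (i j : Fin 3), m ≠ n → MS_D A B C (m,i) (n,j) = max (A m) (A n) :=
    fun m n i j h => if_neg h
  refine ⟨⟨?_, ?_, ?_⟩, ?_⟩
  · rintro ⟨m,i⟩ ⟨n,j⟩
    by_cases h : m = n
    · subst h; rw [Dsame]; exact tnn m i j
    · rw [Ddiff m n i j h]; exact le_trans (hA m).le (le_max_left _ _)
  · rintro ⟨m,i⟩ ⟨n,j⟩
    by_cases h : m = n
    · subst h; rw [Dsame, tzero m i j]
      constructor
      · rintro rfl; rfl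
      · rintro h2; exact congrArg Prod.snd h2
    · rw [Ddiff m n i j h]
      constructor
      · intro h2; exfalso
        have := lt_of_lt_of_le (hA m) (le_max_left (A m) (A n)); linarith
      · intro h2; exact absurd (congrArg Prod.fst h2) h
  · rintro ⟨m,i⟩ ⟨n,j⟩
    by_cases h : m = n
    · subst h; rw [Dsame, Dsame]; exact tsym m i j
    · rw [Ddiff m n i j h, Ddiff n m j i (Ne.symm h)]; exact max_comm _ _
  · rintro ⟨m,i⟩ ⟨n,j⟩ ⟨k,l⟩
    by_cases h1 : m = n
    · subst h1
      by_cases h2 : m = k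
      · subst h2; rw [Dsame, Dsame, Dsame]; exact ttri m i j l
      · rw [Dsame, Ddiff m k j l h2, Ddiff m k i l h2]
        have := tnn m i j; linarith
    · by_cases h2 : n = k
      · subst h2
        rw [Dsame, Ddiff m n i j h1, Ddiff m n i l h1]
        have := tnn n j l; linarith
      · by_cases h3 : m = k
        · subst h3
          rw [Dsame, Ddiff m n i j h1, Ddiff n m j l (fun hh => h1 hh.symm)]
          have h5 : MS_tri (A m) (B m) (C m) i l ≤ max (A m) (A n) :=
            le_trans (tle m i l) (le_max_left _ _)
          have h4 : (0:ℝ) ≤ max (A n) (A m) := le_trans (hA n).le (le_max_left _ _)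
          linarith
        · rw [Ddiff m k i l h3, Ddiff m n i j h1, Ddiff n k j l h2]
          have e1 : A m ≤ max (A m) (A n) := le_max_left _ _
          have e2 : A k ≤ max (A n) (A k) := le_max_right _ _
          have e3 : (0:ℝ) ≤ max (A m) (A n) := le_trans (hA m).le (le_max_left _ _)
          have e4 : (0:ℝ) ≤ max (A n) (A k) := le_trans (hA n).le (le_max_left _ _)
          exact max_le (by linarith) (by linarith)

end MSaux

/-- Characterization of (M)-(S)-preserving functions via triplets. -/

theorem M_to_S_preserving_characterization (f : ℝ → ℝ)
    (hf : ∀ x : ℝ, 0 ≤ x → 0 ≤ f x)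
    (hamen : ∀ x : ℝ, 0 ≤ x → (f x = 0 ↔ x = 0)) :
    (∀ (α : Type) (X : Set α) (d : α → α → ℝ), X.Nonempty →
        IsMetricOn X d →
          IsSemimetricOn X (fun x y => f (d x y)) ∧
          ∃ K' : ℝ, IsStrongBMetricOn X (fun x y => f (d x y)) K') ↔
    (∃ K : ℝ, 1 ≤ K ∧
      ∀ a b c : ℝ, IsTriangleTriplet 1 a b c →
        FormsStrongTriangleTriplet K (f a) (f b) (f c)) := by

  constructor
  · -- (M)-(S)-preserving implies uniform triplet condition
    intro h
    by_contra hcon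
    push_neg at hcon
    have hcon' : ∀ n : ℕ, ∃ a b c : ℝ, IsTriangleTriplet 1 a b c ∧
        ¬ FormsStrongTriangleTriplet ((n:ℝ)+1) (f a) (f b) (f c) := by
      intro n
      exact hcon ((n:ℝ)+1) (by have : (0:ℝ) ≤ n := Nat.cast_nonneg n; linarith)
    choose A B C hT hbad using hcon'
    have hBA : ∀ n, B n ≤ A n := fun n => (hT n).1
    have hCB : ∀ n, C n ≤ B n := fun n => (hT n).2.1
    have hC0 : ∀ n, 0 ≤ C n := fun n => (hT n).2.2.1
    have hsum : ∀ n, A n ≤ B n + C n := fun n => by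
      have := (hT n).2.2.2; linarith
    have hA0 : ∀ n, 0 ≤ A n := fun n => le_trans (hC0 n) (le_trans (hCB n) (hBA n))
    have hf0 : f 0 = 0 := (hamen 0 le_rfl).mpr rfl
    have hCpos : ∀ n, 0 < C n := by
      intro n
      rcases lt_or_eq_of_le (hC0 n) with hlt | heq
      · exact hlt
      · exfalso
        have hCn0 : C n = 0 := heq.symm
        have hAB : A n = B n := le_antisymm (by have := hsum n; rw [hCn0] at this; linarith) (hBA n)
        apply hbad n
        have e1 : f (B n) = f (A n) := by rw [← hAB]
        have e2 : f (C n) = 0 := by rw [hCn0]; exact hf0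
        refine ⟨f (A n), f (A n), 0, ?_, le_rfl, hf _ (hA0 n), le_rfl, by nlinarith [hf _ (hA0 n)]⟩
        rw [e1, e2]
    have hmet := MS_D_metric hCpos hCB hBA hsum
    have hmetric : IsMetricOn (Set.univ : Set (ℕ × Fin 3)) (MS_D A B C) :=
      ⟨⟨fun x _ y _ => hmet.1.1 x y, fun x _ y _ => hmet.1.2.1 x y,
        fun x _ y _ => hmet.1.2.2 x y⟩, fun x _ y _ z _ => hmet.2 x y z⟩
    obtain ⟨hsemi, K', hSB⟩ := h (ℕ × Fin 3) Set.univ (MS_D A B C) ⟨(0, 0), trivial⟩ hmetric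
    obtain ⟨_, hK'1, hineq⟩ := hSB
    set n := ⌈K'⌉₊ with hn
    have hK'n : K' ≤ (n:ℝ) + 1 := le_trans (Nat.le_ceil K') (by linarith)
    have Dsame : ∀ (i j : Fin 3), MS_D A B C (n,i) (n,j) = MS_tri (A n) (B n) (C n) i j :=
      fun i j => if_pos rfl
    have key : ∀ i j k : Fin 3, f (MS_tri (A n) (B n) (C n) i k) ≤
        K' * f (MS_tri (A n) (B n) (C n) i j) + f (MS_tri (A n) (B n) (C n) j k) := by
      intro i j k
      have := hineq (n,i) trivial (n,j) trivial (n,k) trivial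
      simpa only [Dsame] using this
    have e00 : MS_tri (A n) (B n) (C n) 0 2 = A n := by simp [MS_tri]
    have e01 : MS_tri (A n) (B n) (C n) 2 0 = A n := by simp [MS_tri]
    have e02 : MS_tri (A n) (B n) (C n) 0 1 = B n := by simp [MS_tri]
    have e03 : MS_tri (A n) (B n) (C n) 1 0 = B n := by simp [MS_tri]
    have e04 : MS_tri (A n) (B n) (C n) 1 2 = C n := by simp [MS_tri]
    have e05 : MS_tri (A n) (B n) (C n) 2 1 = C n := by simp [MS_tri]
    have I1 : f (A n) ≤ K' * f (B n) + f (C n) := by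
      have := key 0 1 2; rwa [e00, e02, e04] at this
    have I2 : f (A n) ≤ K' * f (C n) + f (B n) := by
      have := key 2 1 0; rwa [e01, e05, e03] at this
    have I3 : f (B n) ≤ K' * f (A n) + f (C n) := by
      have := key 0 2 1; rwa [e02, e00, e05] at this
    have I4 : f (B n) ≤ K' * f (C n) + f (A n) := by
      have := key 1 2 0; rwa [e03, e04, e01] at this
    have I5 : f (C n) ≤ K' * f (A n) + f (B n) := by
      have := key 2 0 1; rwa [e05, e01, e02] at this
    have I6 : f (C n) ≤ K' * f (B n) + f (A n) := by
      have := key 1 0 2; rwa [e04, e03, e00] at this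
    obtain ⟨a, b, c, hms, hcb, hba⟩ := MS_sort3 (f (A n)) (f (B n)) (f (C n))
    have hfA : 0 ≤ f (A n) := hf _ (hA0 n)
    have hfB : 0 ≤ f (B n) := hf _ (le_trans (hC0 n) (hCB n))
    have hfC : 0 ≤ f (C n) := hf _ (hC0 n)
    apply hbad n
    refine ⟨a, b, c, hms, hba, hcb, ?_, ?_⟩
    · rcases MS_perm3 hms with ⟨e1,e2,e3⟩|⟨e1,e2,e3⟩|⟨e1,e2,e3⟩|⟨e1,e2,e3⟩|⟨e1,e2,e3⟩|⟨e1,e2,e3⟩ <;>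
        rw [e3] <;> assumption
    · rcases MS_perm3 hms with ⟨e1,e2,e3⟩|⟨e1,e2,e3⟩|⟨e1,e2,e3⟩|⟨e1,e2,e3⟩|⟨e1,e2,e3⟩|⟨e1,e2,e3⟩ <;>
        subst e1 <;> subst e2 <;> subst e3
      · nlinarith [I2, hfC]
      · nlinarith [I1, hfB]
      · nlinarith [I4, hfC]
      · nlinarith [I3, hfA]
      · nlinarith [I6, hfB]
      · nlinarith [I5, hfA]
  · -- triplet condition implies (M)-(S)-preserving
    rintro ⟨K, hK, htrip⟩ α X d hne hmetd
    obtain ⟨⟨hpos, hzero, hsymm⟩, htriangle⟩ := hmetd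
    have hsemi : IsSemimetricOn X (fun x y => f (d x y)) := by
      refine ⟨fun x hx y hy => hf _ (hpos x hx y hy), fun x hx y hy => ?_,
        fun x hx y hy => by simp only; rw [hsymm x hx y hy]⟩
      simp only
      rw [hamen _ (hpos x hx y hy)]
      exact hzero x hx y hy
    refine ⟨hsemi, K, hsemi, hK, ?_⟩
    intro x hx y hy z hz
    simp only
    have t1 : d x z ≤ d x y + d y z := htriangle x hx y hy z hz
    have t2 : d x y ≤ d x z + d y z := by
      have := htriangle x hx z hz y hy
      rwa [hsymm z hz y hy] at this
    have t3 : d y z ≤ d x y + d x z := by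
      have := htriangle y hy x hx z hz
      rwa [hsymm y hy x hx] at this
    have n1 : 0 ≤ d x z := hpos x hx z hz
    have n2 : 0 ≤ d x y := hpos x hx y hy
    have n3 : 0 ≤ d y z := hpos y hy z hz
    obtain ⟨a, b, c, hms, hcb, hba⟩ := MS_sort3 (d x z) (d x y) (d y z)
    have hTT : IsTriangleTriplet 1 a b c := by
      refine ⟨hba, hcb, ?_, ?_⟩ <;>
        rcases MS_perm3 hms with ⟨e1,e2,e3⟩|⟨e1,e2,e3⟩|⟨e1,e2,e3⟩|⟨e1,e2,e3⟩|⟨e1,e2,e3⟩|⟨e1,e2,e3⟩ <;>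
        subst e1 <;> subst e2 <;> subst e3 <;> linarith
    obtain ⟨a', b', c', hms', hs⟩ := htrip a b c hTT
    have hfms : ({f a, f b, f c} : Multiset ℝ) = {f (d x z), f (d x y), f (d y z)} := by
      rcases MS_perm3 hms with ⟨e1,e2,e3⟩|⟨e1,e2,e3⟩|⟨e1,e2,e3⟩|⟨e1,e2,e3⟩|⟨e1,e2,e3⟩|⟨e1,e2,e3⟩ <;>
        subst e1 <;> subst e2 <;> subst e3
      · rfl
      · exact MS_msw23 _ _ _
      · exact MS_msw12 _ _ _
      · exact (MS_msrot _ _ _).symm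
      · exact MS_msrot _ _ _
      · exact MS_msw13 _ _ _
    exact MS_lemA hK hs (hms'.trans hfms)
end

section
/- Let f : [0,∞) → [0,∞) be amenable. Then f is (S)-(M)-preserving (i.e., for every strong b-metric space (X,d), f∘d is a semimetric and (X, f∘d) is a metric space) if and only if for every K ≥ 1 and every strong K-triangle triplet (a,b,c), the values f(a), f(b), f(c) can be arranged into a triangle triplet. -/
/- ### Auxiliary material -/

private def dd (a b c : ℝ) : Fin 3 → Fin 3 → ℝ :=
  fun i j =>
    if i = j then 0
    else if (i = 0 ∧ j = 1) ∨ (i = 1 ∧ j = 0) then a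
    else if (i = 0 ∧ j = 2) ∨ (i = 2 ∧ j = 0) then b
    else c

private lemma ms_swap12 (x y z : ℝ) : ({y,x,z} : Multiset ℝ) = {x,y,z} :=
  Multiset.cons_swap y x {z}
private lemma ms_swap23 (x y z : ℝ) : ({x,z,y} : Multiset ℝ) = {x,y,z} :=
  congrArg (Multiset.cons x) (Multiset.cons_swap z y 0)
private lemma ms_rot (x y z : ℝ) : ({y,z,x} : Multiset ℝ) = {x,y,z} := by
  rw [ms_swap23, ms_swap12]
private lemma ms_rot2 (x y z : ℝ) : ({z,x,y} : Multiset ℝ) = {x,y,z} := by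
  rw [ms_swap12, ms_swap23]
private lemma ms_swap13 (x y z : ℝ) : ({z,y,x} : Multiset ℝ) = {x,y,z} := by
  rw [ms_swap23, ms_swap12, ms_swap23]

private lemma mem3 {a b c x y z : ℝ} (h : ({a,b,c}:Multiset ℝ) = {x,y,z})
    {t : ℝ} (ht : t ∈ ({x,y,z} : Multiset ℝ)) : t = a ∨ t = b ∨ t = c := by
  rw [← h] at ht
  simpa using ht

private lemma sum3 {a b c x y z : ℝ} (h : ({a,b,c}:Multiset ℝ) = {x,y,z}) :
    a + b + c = x + y + z := by
  have := congrArg Multiset.sum h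
  simpa [add_assoc] using this

/-- All three triangle inequalities follow from forming a `1`-triangle triplet. -/
private lemma forms_all {x y z : ℝ} (h : FormsTriangleTriplet 1 x y z) :
    x ≤ y + z ∧ y ≤ x + z ∧ z ≤ x + y := by
  obtain ⟨A, B, C, hm, hBA, hCB, hC0, hA⟩ := h
  have hsum := sum3 hm
  have hx : x = A ∨ x = B ∨ x = C := mem3 hm (by simp)
  have hy : y = A ∨ y = B ∨ y = C := mem3 hm (by simp)
  have hz : z = A ∨ z = B ∨ z = C := mem3 hm (by simp)
  rw [one_mul] at hA
  rcases hx with hx|hx|hx <;> rcases hy with hy|hy|hy <;> rcases hz with hz|hz|hz <;>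
    subst hx <;> subst hy <;> subst hz <;>
    exact ⟨by linarith, by linarith, by linarith⟩

/-- Conversely, the three triangle inequalities give a `1`-triangle triplet. -/
private lemma forms_of_ineqs {u v w : ℝ} (hu : 0 ≤ u) (hv : 0 ≤ v) (hw : 0 ≤ w)
    (h1 : u ≤ v + w) (h2 : v ≤ u + w) (h3 : w ≤ u + v) :
    FormsTriangleTriplet 1 u v w := by
  rcases le_total u v with h4|h4 <;> rcases le_total v w with h5|h5 <;>
    rcases le_total u w with h6|h6
  · exact ⟨w, v, u, ms_swap13 u v w, h5, h4, hu, by linarith⟩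
  · exact ⟨w, v, u, ms_swap13 u v w, h5, h4, hu, by linarith⟩
  · exact ⟨v, w, u, ms_rot u v w, h5, h6, hu, by linarith⟩
  · exact ⟨v, u, w, ms_swap12 u v w, h4, h6, hw, by linarith⟩
  · exact ⟨w, u, v, ms_rot2 u v w, h6, h4, hv, by linarith⟩
  · exact ⟨u, w, v, ms_swap23 u v w, h6, h5, hv, by linarith⟩
  · exact ⟨u, v, w, rfl, h4, h5, hw, by linarith⟩
  · exact ⟨u, v, w, rfl, h4, h5, hw, by linarith⟩

/-- Characterization of (S)-(M)-preserving functions via triplets. -/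
theorem S_to_M_preserving_characterization (f : ℝ → ℝ)
    (hf : ∀ x : ℝ, 0 ≤ x → 0 ≤ f x)
    (hamen : ∀ x : ℝ, 0 ≤ x → (f x = 0 ↔ x = 0)) :
    (∀ (α : Type) (X : Set α) (d : α → α → ℝ), X.Nonempty →
        (∃ K : ℝ, IsStrongBMetricOn X d K) →
          IsSemimetricOn X (fun x y => f (d x y)) ∧
          IsMetricOn X (fun x y => f (d x y))) ↔
    (∀ K : ℝ, 1 ≤ K →
      ∀ a b c : ℝ, IsStrongTriangleTriplet K a b c →
        FormsTriangleTriplet 1 (f a) (f b) (f c)) := by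
  constructor
  · -- forward direction
    intro h K hK a b c hT
    obtain ⟨hba, hcb, hc0, habc⟩ := hT
    by_cases hc : c = 0
    · subst hc
      have hb0 : 0 ≤ b := hcb
      have hab : a = b := le_antisymm (by linarith) hba
      have hf0 : f 0 = 0 := (hamen 0 le_rfl).mpr rfl
      subst hab
      refine ⟨f a, f a, f 0, rfl, le_rfl, ?_, ?_, ?_⟩
      · rw [hf0]; exact hf a hb0
      · rw [hf0]
      · rw [hf0]; linarith [hf a hb0]
    · have hc' : 0 < c := lt_of_le_of_ne hc0 (Ne.symm hc)
      have hb' : 0 < b := lt_of_lt_of_le hc' hcb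
      have ha' : 0 < a := lt_of_lt_of_le hb' hba
      have hstrong : IsStrongBMetricOn (Set.univ : Set (Fin 3)) (dd a b c) K := by
        refine ⟨⟨?_, ?_, ?_⟩, hK, ?_⟩
        · intro x _ y _
          fin_cases x <;> fin_cases y <;> norm_num [dd, Fin.ext_iff] <;> linarith
        · intro x _ y _
          fin_cases x <;> fin_cases y <;> norm_num [dd, Fin.ext_iff] <;>
            first
              | exact ne_of_gt ha'
              | exact ne_of_gt hb'
              | exact ne_of_gt hc'
        · intro x _ y _
          fin_cases x <;> fin_cases y <;> norm_num [dd, Fin.ext_iff]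
        · intro x _ y _ z _
          fin_cases x <;> fin_cases y <;> fin_cases z <;> norm_num [dd, Fin.ext_iff] <;>
            nlinarith [mul_nonneg (sub_nonneg.2 hK) ha'.le,
              mul_nonneg (sub_nonneg.2 hK) hb'.le,
              mul_nonneg (sub_nonneg.2 hK) hc'.le,
              mul_nonneg (sub_nonneg.2 hK) (sub_nonneg.2 hcb)]
      obtain ⟨-, -, tri⟩ := h (Fin 3) Set.univ (dd a b c) ⟨0, trivial⟩ ⟨K, hstrong⟩
      have e01 : dd a b c 0 1 = a := by norm_num [dd, Fin.ext_iff]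
      have e10 : dd a b c 1 0 = a := by norm_num [dd, Fin.ext_iff]
      have e02 : dd a b c 0 2 = b := by norm_num [dd, Fin.ext_iff]
      have e20 : dd a b c 2 0 = b := by norm_num [dd, Fin.ext_iff]
      have e12 : dd a b c 1 2 = c := by norm_num [dd, Fin.ext_iff]
      have e21 : dd a b c 2 1 = c := by norm_num [dd, Fin.ext_iff]
      have t1 := tri 0 trivial 2 trivial 1 trivial
      have t2 := tri 0 trivial 1 trivial 2 trivial
      have t3 := tri 1 trivial 0 trivial 2 trivial
      simp only [e01, e10, e02, e20, e12, e21] at t1 t2 t3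
      exact forms_of_ineqs (hf a ha'.le) (hf b hb'.le) (hf c hc'.le) t1 t2 t3
  · -- reverse direction
    intro h α X d hne hK'
    obtain ⟨K, ⟨hnn, hz, hsym⟩, hK, htri⟩ := hK'
    have sem : IsSemimetricOn X (fun x y => f (d x y)) := by
      refine ⟨fun x hx y hy => hf _ (hnn x hx y hy),
        fun x hx y hy => (hamen _ (hnn x hx y hy)).trans (hz x hx y hy),
        fun x hx y hy => ?_⟩
      simp only
      rw [hsym x hx y hy]
    refine ⟨sem, sem, ?_⟩
    intro x hx y hy z hz'
    simp only
    set p := d x y with hp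
    set q := d y z with hq
    set r := d x z with hr
    have hp0 : 0 ≤ p := hnn x hx y hy
    have hq0 : 0 ≤ q := hnn y hy z hz'
    have hr0 : 0 ≤ r := hnn x hx z hz'
    have syx : d y x = p := (hsym x hx y hy).symm
    have szy : d z y = q := (hsym y hy z hz').symm
    have szx : d z x = r := (hsym x hx z hz').symm
    have h1 : r ≤ K * p + q := htri x hx y hy z hz'
    have h2 : r ≤ K * q + p := by
      have := htri z hz' y hy x hx; rwa [szx, szy, syx] at this
    have h3 : p ≤ K * r + q := by
      have := htri x hx z hz' y hy; rwa [szy] at this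
    have h4 : p ≤ K * q + r := by
      have := htri y hy z hz' x hx; rwa [syx, szx] at this
    have h5 : q ≤ K * p + r := by
      have := htri y hy x hx z hz'; rwa [syx] at this
    have h6 : q ≤ K * r + p := by
      have := htri z hz' x hx y hy; rwa [szy, szx] at this
    -- sort p, q, r and apply the triplet hypothesis
    rcases le_total p q with c1|c1 <;> rcases le_total q r with c2|c2 <;>
      rcases le_total p r with c3|c3
    · have t := forms_all (h K hK r q p ⟨c2, c1, hp0, h1⟩)
      linarith [t.1]
    · have t := forms_all (h K hK r q p ⟨c2, c1, hp0, h1⟩)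
      linarith [t.1]
    · have t := forms_all (h K hK q r p ⟨c2, c3, hp0, h5⟩)
      linarith [t.2.1]
    · have t := forms_all (h K hK q p r ⟨c1, c3, hr0, h6⟩)
      linarith [t.2.2]
    · have t := forms_all (h K hK r p q ⟨c3, c1, hq0, h2⟩)
      linarith [t.1]
    · have t := forms_all (h K hK p r q ⟨c3, c2, hq0, h4⟩)
      linarith [t.2.1]
    · have t := forms_all (h K hK p q r ⟨c1, c2, hr0, h3⟩)
      linarith [t.2.2]
    · have t := forms_all (h K hK p q r ⟨c1, c2, hr0, h3⟩)
      linarith [t.2.2]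
end
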